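/- Let Γ₁, …, Γ_s be nontrivial groups and let Γ = Γ₁ × ⋯ × Γ_s. Suppose that every automorphism of Γ permutes the canonical factor subgroups (for every automorphism φ there is a permutation σ of {1, …, s} with φ(Gᵢ) = G_{σ(i)} for all i). Then the kernel of the induced homomorphism Out(Γ) → Sym(s) is isomorphic, as a group, to the direct product Out(Γ₁) × ⋯ × Out(Γ_s). -/

import Mathlib

/-!
An automorphism of `Γ` that fixes every factor subgroup `Gᵢ ≅ Γᵢ` restricts to an automorphism
of each `Γᵢ` and is the coordinatewise product of these restrictions, so the factor-fixing
automorphisms are exactly the image of `∏ Aut(Γᵢ)`. As the factors are nontrivial, `Gᵢ`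
determines `i`; hence the kernel of `Out(Γ) → Sym(s)` is the image of `∏ Aut(Γᵢ)` in `Out(Γ)`.
A coordinatewise automorphism is inner iff each coordinate is, so this image is
`∏ Aut(Γᵢ) / ∏ Inn(Γᵢ) ≅ ∏ Out(Γᵢ)`.
-/

/-- The `i`-th canonical factor subgroup of a direct product `Γ = Γ₁ × ⋯ × Γ_s`:
tuples whose coordinates are trivial except possibly at position `i`. -/
def factorSubgroup {s : ℕ} (Γ : Fin s → Type*) [∀ i, Group (Γ i)] (i : Fin s) :
    Subgroup (∀ j, Γ j) where
  carrier := {x | ∀ j, j ≠ i → x j = 1}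
  one_mem' := fun _ _ => rfl
  mul_mem' := by
    intro a b ha hb j hj
    simp [Pi.mul_apply, ha j hj, hb j hj]
  inv_mem' := by
    intro a ha j hj
    simp [Pi.inv_apply, ha j hj]

/-- The subgroup of inner automorphisms `Inn(G) ≤ Aut(G)`, i.e. the range of the
conjugation homomorphism `G →* Aut(G)`, is a normal subgroup. -/
instance innRangeNormal (G : Type*) [Group G] :
    ((MulAut.conj : G →* MulAut G).range).Normal := by
  constructor
  rintro _ ⟨g, rfl⟩ φ
  refine ⟨φ g, ?_⟩
  ext x
  simp [MulAut.conj, mul_assoc]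

/-- The outer automorphism group `Out(G) = Aut(G)/Inn(G)`. -/
abbrev OutGroup (G : Type*) [Group G] :=
  MulAut G ⧸ (MulAut.conj : G →* MulAut G).range

namespace MulAut

variable {ι : Type*} {G : ι → Type*}

section Mul

variable [∀ i, Mul (G i)]

def piCongrRight : (∀ i, MulAut (G i)) →* MulAut (∀ i, G i) where
  toFun := MulEquiv.piCongrRight
  map_one' := rfl
  map_mul' _ _ := rfl

@[simp]
lemma piCongrRight_apply (e : ∀ i, MulAut (G i)) (x : ∀ i, G i) (i : ι) :
    piCongrRight e x i = e i (x i) := rfl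

@[simp]
lemma piCongrRight_symm_apply (e : ∀ i, MulAut (G i)) (x : ∀ i, G i) (i : ι) :
    (piCongrRight e).symm x i = (e i).symm (x i) := rfl

end Mul

variable [∀ i, Group (G i)]

lemma piCongrRight_conj (g : ∀ i, G i) : piCongrRight (fun i => conj (g i)) = conj g := by
  ext x i
  simp

lemma piCongrRight_mulSingle [DecidableEq ι] (e : ∀ i, MulAut (G i)) (i : ι) (g : G i) :
    piCongrRight e (Pi.mulSingle i g) = Pi.mulSingle i (e i g) :=
  funext <| Pi.apply_mulSingle (fun i => e i) (fun i => map_one (e i)) i g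

lemma piCongrRight_mem_range_conj_iff [DecidableEq ι] (e : ∀ i, MulAut (G i)) :
    piCongrRight e ∈ (conj : (∀ i, G i) →* _).range ↔ ∀ i, e i ∈ (conj : G i →* _).range := by
  constructor
  · rintro ⟨g, hg⟩ i
    refine ⟨g i, MulEquiv.ext fun x => ?_⟩
    simpa using congr_fun (DFunLike.congr_fun hg (Pi.mulSingle i x)) i
  · intro he
    choose g hg using he
    exact ⟨g, by rw [← piCongrRight_conj]; simp only [hg]⟩

lemma ker_mk_comp_piCongrRight [DecidableEq ι] :
    ((QuotientGroup.mk' (conj : (∀ i, G i) →* _).range).comp piCongrRight).ker =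
      (MonoidHom.piMap fun i => QuotientGroup.mk' (conj : G i →* _).range).ker := by
  ext e
  simp only [MonoidHom.mem_ker, MonoidHom.comp_apply, QuotientGroup.mk'_apply,
    QuotientGroup.eq_one_iff, funext_iff, MonoidHom.piMap_apply, Pi.one_apply]
  exact piCongrRight_mem_range_conj_iff e

end MulAut

section FactorSubgroup

variable {s : ℕ} {Γ : Fin s → Type*} [∀ i, Group (Γ i)]

lemma mem_factorSubgroup {i : Fin s} {x : ∀ j, Γ j} :
    x ∈ factorSubgroup Γ i ↔ ∀ j, j ≠ i → x j = 1 := Iff.rfl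

lemma range_mulSingle_eq_factorSubgroup (i : Fin s) :
    (MonoidHom.mulSingle Γ i).range = factorSubgroup Γ i := by
  ext x
  constructor
  · rintro ⟨g, rfl⟩ j hj
    exact Pi.mulSingle_eq_of_ne hj g
  · intro hx
    refine ⟨x i, funext fun j => ?_⟩
    by_cases hj : j = i
    · subst hj; simp
    · simp [Pi.mulSingle_eq_of_ne hj, hx j hj]

lemma factorSubgroup_injective [∀ i, Nontrivial (Γ i)] :
    Function.Injective (factorSubgroup Γ) := by
  intro i j hij
  by_contra hne
  obtain ⟨g, hg⟩ := exists_ne (1 : Γ i)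
  have hmem : Pi.mulSingle i g ∈ factorSubgroup Γ j := by
    rw [← hij, ← range_mulSingle_eq_factorSubgroup]
    exact ⟨g, rfl⟩
  exact hg (by simpa using hmem i hne)

lemma map_piCongrRight_factorSubgroup (e : ∀ i, MulAut (Γ i)) (i : Fin s) :
    (factorSubgroup Γ i).map (MulAut.piCongrRight e).toMonoidHom = factorSubgroup Γ i := by
  ext x
  rw [Subgroup.mem_map_equiv]
  simp [mem_factorSubgroup]

noncomputable def factorSubgroupEquiv (i : Fin s) : Γ i ≃* factorSubgroup Γ i :=
  (MonoidHom.ofInjective (Pi.mulSingle_injective (M := Γ) i)).trans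
    (MulEquiv.subgroupCongr (range_mulSingle_eq_factorSubgroup i))

@[simp]
lemma coe_factorSubgroupEquiv (i : Fin s) (g : Γ i) :
    (factorSubgroupEquiv i g : ∀ j, Γ j) = Pi.mulSingle i g := rfl

noncomputable def componentAut (φ : MulAut (∀ i, Γ i)) (i : Fin s)
    (hφ : (factorSubgroup Γ i).map φ.toMonoidHom = factorSubgroup Γ i) : MulAut (Γ i) :=
  (factorSubgroupEquiv i).trans <| (φ.subgroupMap _).trans <|
    (MulEquiv.subgroupCongr hφ).trans (factorSubgroupEquiv i).symm

lemma mulSingle_componentAut (φ : MulAut (∀ i, Γ i)) (i : Fin s)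
    (hφ : (factorSubgroup Γ i).map φ.toMonoidHom = factorSubgroup Γ i) (g : Γ i) :
    Pi.mulSingle i (componentAut φ i hφ g) = φ (Pi.mulSingle i g) := by
  rw [← coe_factorSubgroupEquiv]
  exact congrArg Subtype.val ((factorSubgroupEquiv i).apply_symm_apply _)

lemma piCongrRight_componentAut (φ : MulAut (∀ i, Γ i))
    (hφ : ∀ i, (factorSubgroup Γ i).map φ.toMonoidHom = factorSubgroup Γ i) :
    MulAut.piCongrRight (fun i => componentAut φ i (hφ i)) = φ :=
  MulEquiv.toMonoidHom_injective <| MonoidHom.pi_ext fun i g => by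
    simp [MulAut.piCongrRight_mulSingle, mulSingle_componentAut]

lemma mem_range_piCongrRight_iff (φ : MulAut (∀ i, Γ i)) :
    φ ∈ (MulAut.piCongrRight : (∀ i, MulAut (Γ i)) →* _).range ↔
      ∀ i, (factorSubgroup Γ i).map φ.toMonoidHom = factorSubgroup Γ i := by
  constructor
  · rintro ⟨e, rfl⟩
    exact map_piCongrRight_factorSubgroup e
  · intro hφ
    exact ⟨_, piCongrRight_componentAut φ hφ⟩

end FactorSubgroup

section OuterAutomorphisms

variable {s : ℕ} {Γ : Fin s → Type*} [∀ i, Group (Γ i)] [∀ i, Nontrivial (Γ i)]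
  {Ψ : OutGroup (∀ i, Γ i) →* Equiv.Perm (Fin s)}

lemma mk_mem_ker_iff_map_factorSubgroup_eq
    (hΨ : ∀ (φ : MulAut (∀ i, Γ i)) (i : Fin s),
      (factorSubgroup Γ i).map φ.toMonoidHom = factorSubgroup Γ (Ψ (QuotientGroup.mk φ) i))
    (φ : MulAut (∀ i, Γ i)) :
    (QuotientGroup.mk φ : OutGroup (∀ i, Γ i)) ∈ Ψ.ker ↔
      ∀ i, (factorSubgroup Γ i).map φ.toMonoidHom = factorSubgroup Γ i := by
  simp only [MonoidHom.mem_ker, Equiv.ext_iff, hΨ, factorSubgroup_injective.eq_iff,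
    Equiv.Perm.coe_one, id_eq]

lemma range_mk_comp_piCongrRight_eq_ker
    (hΨ : ∀ (φ : MulAut (∀ i, Γ i)) (i : Fin s),
      (factorSubgroup Γ i).map φ.toMonoidHom = factorSubgroup Γ (Ψ (QuotientGroup.mk φ) i)) :
    ((QuotientGroup.mk' (MulAut.conj : (∀ i, Γ i) →* _).range).comp MulAut.piCongrRight).range =
      Ψ.ker := by
  ext q
  induction q using QuotientGroup.induction_on with | H φ => ?_
  constructor
  · rintro ⟨e, he⟩
    rw [← he, MonoidHom.comp_apply, QuotientGroup.mk'_apply,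
      mk_mem_ker_iff_map_factorSubgroup_eq hΨ]
    exact map_piCongrRight_factorSubgroup e
  · rw [mk_mem_ker_iff_map_factorSubgroup_eq hΨ, ← mem_range_piCongrRight_iff]
    rintro ⟨e, rfl⟩
    exact ⟨e, rfl⟩

end OuterAutomorphisms

theorem ker_of_induced_out_to_perm_iso_pi_out_general
    {s : ℕ} (Γ : Fin s → Type*) [∀ i, Group (Γ i)] [∀ i, Nontrivial (Γ i)]
    (Ψ : OutGroup (∀ i, Γ i) →* Equiv.Perm (Fin s))
    (hΨ : ∀ (φ : MulAut (∀ i, Γ i)) (i : Fin s),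
      (factorSubgroup Γ i).map φ.toMonoidHom
        = factorSubgroup Γ (Ψ (QuotientGroup.mk φ) i)) :
    Nonempty (Ψ.ker ≃* ∀ i, OutGroup (Γ i)) := by
  have hsurj : Function.Surjective
      (MonoidHom.piMap fun i => QuotientGroup.mk' (MulAut.conj : Γ i →* _).range) :=
    Function.Surjective.piMap fun i => QuotientGroup.mk'_surjective _
  exact ⟨(MulEquiv.subgroupCongr (range_mk_comp_piCongrRight_eq_ker hΨ).symm).trans <|
    (QuotientGroup.quotientKerEquivRange _).symm.trans <|
    (QuotientGroup.quotientMulEquivOfEq MulAut.ker_mk_comp_piCongrRight).trans <|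
    QuotientGroup.quotientKerEquivOfSurjective _ hsurj⟩

/-- Let `Γ₁, …, Γ_s` be nontrivial groups, `Γ` their direct product, and
suppose every automorphism of `Γ` permutes the canonical factor subgroups.  Then the kernel
of the induced homomorphism `Out(Γ) →* Sym(s)` (i.e. of any homomorphism sending the class
of `φ` to the permutation `σ_φ` with `φ(Gᵢ) = G_{σ_φ(i)}`) is isomorphic to the direct
product `Out(Γ₁) × ⋯ × Out(Γ_s)`. -/
theorem ker_of_induced_out_to_perm_iso_pi_out
    {s : ℕ} (Γ : Fin s → Type*) [∀ i, Group (Γ i)] [∀ i, Nontrivial (Γ i)]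
    (h : ∀ φ : MulAut (∀ i, Γ i), ∃ σ : Equiv.Perm (Fin s),
      ∀ i, (factorSubgroup Γ i).map φ.toMonoidHom = factorSubgroup Γ (σ i))
    (Ψ : OutGroup (∀ i, Γ i) →* Equiv.Perm (Fin s))
    (hΨ : ∀ (φ : MulAut (∀ i, Γ i)) (i : Fin s),
      (factorSubgroup Γ i).map φ.toMonoidHom
        = factorSubgroup Γ (Ψ (QuotientGroup.mk φ) i)) :
    Nonempty (Ψ.ker ≃* ∀ i, OutGroup (Γ i)) :=
  ker_of_induced_out_to_perm_iso_pi_out_general Γ Ψ hΨ
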